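/- arXiv:2303.14580 — 4 statements merged into one kernel-verified Lean document; each statement's English description precedes it below -/
import Mathlib

section
/- Moment formula for the Poisson state: for a state ω on a unital algebra N with ω(1) = λ, and elements x_1,...,x_n ∈ N, define λ_m(x) := Σ_{j=1}^m π_j(x) ∈ N^{⊗m} where π_j embeds x into the j-th tensor factor. Then e^{-λ} Σ_{m≥0} (1/m!) ω^{⊗m}(λ_m(x_1)···λ_m(x_n)) = Σ_{σ ∈ P(n)} Π_{A∈σ} ω(→Π_{i∈A} x_i), where P(n) is the set of set partitions of {1,...,n} and →Π denotes the ordered product over each block A with the order inherited from {1,...,n}. -/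
/-!
Expanding the product, `∏ᵢ λ_m(xᵢ) = ∑_{f : [n] → [m]} ⊗ⱼ →∏_{f i = j} xᵢ`, so that
`ω^{⊗m}(λ_m(x₁) ⋯ λ_m(xₙ)) = ∑_f ∏ⱼ ω(→∏_{f i = j} xᵢ)`. Grouping the maps `f` by the partition
`σ` of `[n]` into their nonempty fibres, each of the `m (m-1) ⋯ (m-|σ|+1)` maps with kernel `σ`
contributes `λ^{m-|σ|} ∏_{A ∈ σ} ω(→∏_{i ∈ A} xᵢ)`, an empty fibre giving `ω(1) = λ`. The formula
then follows from `∑_m m (m-1) ⋯ (m-k+1) λ^{m-k} / m! = e^λ`.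
-/

open scoped TensorProduct
open PiTensorProduct

variable {N : Type*} [Ring N] [Algebra ℂ N]

/-- The embedding `π_j : N → N^{⊗m}`, `x ↦ 1 ⊗ ⋯ ⊗ x ⊗ ⋯ ⊗ 1` (`x` in position `j`). -/
noncomputable def piEmbed (m : ℕ) (j : Fin m) (x : N) : ⨂[ℂ] _ : Fin m, N :=
  tprod ℂ (fun i => if i = j then x else 1)

/-- `λ_m(x) := ∑_{j=1}^m π_j(x) ∈ N^{⊗m}`. -/
noncomputable def lamM (m : ℕ) (x : N) : ⨂[ℂ] _ : Fin m, N :=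
  ∑ j : Fin m, piEmbed m j x

/-- The tensor power functional `ω^{⊗m} : N^{⊗m} → ℂ`, `⊗_j a_j ↦ ∏_j ω(a_j)`. -/
noncomputable def tensorFunctional (ω : N →ₗ[ℂ] ℂ) (m : ℕ) :
    (⨂[ℂ] _ : Fin m, N) →ₗ[ℂ] ℂ :=
  PiTensorProduct.lift ((MultilinearMap.mkPiAlgebra ℂ (Fin m) ℂ).compLinearMap fun _ => ω)

/-- Ordered product `→∏_{i ∈ A} x_i` over a block `A ⊆ [n]`, with the order inherited
from `[n]`. -/
noncomputable def ordProd {n : ℕ} (x : Fin n → N) (A : Finset (Fin n)) : N :=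
  ((A.sort (· ≤ ·)).map x).prod

open Finset

theorem ordProd_eq_prod_filter_finRange {R : Type*} [Ring R] {n : ℕ} (x : Fin n → R)
    (A : Finset (Fin n)) :
    ordProd x A = (((List.finRange n).filter (· ∈ A)).map x).prod := by
  rw [ordProd, A.sortedLT_sort.eq_of_mem_iff
    ((List.pairwise_lt_finRange n).filter (· ∈ A)).sortedLT (by simp)]

theorem ordProd_fiber_succ {R ι : Type*} [Ring R] [DecidableEq ι] {n : ℕ} (x : Fin (n + 1) → R)
    (f : Fin (n + 1) → ι) (j : ι) :
    ordProd x {i | f i = j} =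
      (if j = f 0 then x 0 else 1) * ordProd (fun i ↦ x i.succ) {i | f i.succ = j} := by
  simp only [ordProd_eq_prod_filter_finRange, List.finRange_succ, List.filter_cons,
    List.filter_map]
  split_ifs <;> simp_all [Function.comp_def, eq_comm]

theorem ordProd_empty {R : Type*} [Ring R] {n : ℕ} (x : Fin n → R) : ordProd x ∅ = 1 := by
  simp [ordProd]

theorem tensorFunctional_tprod (ω : N →ₗ[ℂ] ℂ) (m : ℕ) (a : Fin m → N) :
    tensorFunctional ω m (tprod ℂ a) = ∏ j, ω (a j) := by
  simp [tensorFunctional]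

theorem list_prod_lamM (m : ℕ) {n : ℕ} (x : Fin n → N) :
    (List.ofFn fun i ↦ lamM m (x i)).prod =
      ∑ f : Fin n → Fin m, tprod ℂ fun j ↦ ordProd x {i | f i = j} := by
  induction n with
  | zero => simp [ordProd, PiTensorProduct.one_def, Pi.one_def]
  | succ n ih =>
    rw [List.ofFn_succ, List.prod_cons, ih, lamM, sum_mul,
      ← (Fin.consEquiv fun _ ↦ Fin m).sum_comp, Fintype.sum_prod_type]
    refine sum_congr rfl fun j₀ _ ↦ ?_
    rw [mul_sum]
    refine sum_congr rfl fun g _ ↦ ?_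
    rw [piEmbed, tprod_mul_tprod]
    congr 1
    funext j
    rw [ordProd_fiber_succ]
    rfl

theorem tensorFunctional_prod_lamM (ω : N →ₗ[ℂ] ℂ) (m : ℕ) {n : ℕ} (x : Fin n → N) :
    tensorFunctional ω m (List.ofFn fun i ↦ lamM m (x i)).prod =
      ∑ f : Fin n → Fin m, ∏ j, ω (ordProd x {i | f i = j}) := by
  simp only [list_prod_lamM, map_sum, tensorFunctional_tprod]

theorem injOn_fiber {α β : Type*} [Fintype α] [DecidableEq β] (f : α → β) :
    Set.InjOn (fun b ↦ ({a | f a = b} : Finset α)) (univ.image f) := by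
  intro b hb b' _ h
  obtain ⟨a, -, rfl⟩ := mem_image.1 hb
  have ha : a ∈ ({a' | f a' = b'} : Finset α) := by
    dsimp only at h
    simp [← h]
  simpa using ha

namespace Finpartition

section Partition

variable {α : Type*} [DecidableEq α] {s : Finset α}

theorem parts_eq_image_part (P : Finpartition s) : P.parts = s.image P.part := by
  ext A
  simp only [mem_image]
  constructor
  · intro hA
    obtain ⟨a, ha, rfl⟩ := P.part_surjOn hA
    exact ⟨a, ha, rfl⟩
  · rintro ⟨a, ha, rfl⟩
    exact P.part_mem.2 ha

theorem ext_part {P Q : Finpartition s} (h : ∀ a ∈ s, P.part a = Q.part a) : P = Q := by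
  ext1
  rw [P.parts_eq_image_part, Q.parts_eq_image_part]
  exact image_congr h

theorem part_choose_of_mem_parts (P : Finpartition s) {A : Finset α} (hA : A ∈ P.parts) :
    P.part (P.nonempty_of_mem_parts hA).choose = A :=
  P.part_eq_of_mem hA (P.nonempty_of_mem_parts hA).choose_spec

end Partition

variable {α β : Type*} [Fintype α] [DecidableEq α] [DecidableEq β]

def ker (f : α → β) : Finpartition (univ : Finset α) :=
  @ofSetoid _ _ _ (Setoid.ker f) fun a b ↦ decEq (f a) (f b)

theorem part_ker (f : α → β) (a : α) :
    (ker f).part a = ({b | f b = f a} : Finset α) := by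
  ext b
  rw [ker, mem_part_ofSetoid_iff_rel]
  simp [Setoid.ker_def, eq_comm]

theorem ker_eq_iff {f : α → β} {σ : Finpartition (univ : Finset α)} :
    ker f = σ ↔ ∀ a b, f a = f b ↔ σ.part a = σ.part b := by
  have hmem (P : Finpartition (univ : Finset α)) (a b : α) : a ∈ P.part b ↔ P.part a = P.part b :=
    P.mem_part_iff_part_eq_part (mem_univ a) (mem_univ b)
  constructor
  · rintro rfl a b
    rw [← hmem, part_ker, mem_filter]
    simp
  · intro h
    refine ext_part fun a _ ↦ ?_
    ext b
    rw [part_ker, mem_filter, hmem, h]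
    simp

theorem parts_ker (f : α → β) :
    (ker f).parts = (univ.image f).image fun b ↦ ({a | f a = b} : Finset α) := by
  rw [parts_eq_image_part, image_image]
  exact image_congr fun a _ ↦ part_ker f a

theorem card_parts_ker (f : α → β) : #(ker f).parts = #(univ.image f) := by
  rw [parts_ker, card_image_of_injOn (injOn_fiber f)]

theorem prod_fiber_eq_prod_parts_ker [Fintype β] {M : Type*} [CommMonoid M] (g : Finset α → M)
    (f : α → β) :
    ∏ b, g {a | f a = b} =
      (∏ A ∈ (ker f).parts, g A) * g ∅ ^ (Fintype.card β - #(ker f).parts) := by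
  rw [card_parts_ker, ← prod_mul_prod_compl (univ.image f), parts_ker,
    prod_image (injOn_fiber f), ← card_compl, ← prod_const]
  congr 1
  refine prod_congr rfl fun b hb ↦ congrArg g ?_
  ext a
  simp_all

noncomputable def kerEquiv (σ : Finpartition (univ : Finset α)) :
    {f : α → β // ker f = σ} ≃ (σ.parts ↪ β) where
  toFun f := ⟨fun A ↦ f.1 (σ.nonempty_of_mem_parts A.2).choose, fun A B h ↦ Subtype.ext <| by
    rw [← σ.part_choose_of_mem_parts A.2, ← σ.part_choose_of_mem_parts B.2]
    exact (ker_eq_iff.1 f.2 _ _).1 h⟩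
  invFun e := ⟨fun a ↦ e ⟨σ.part a, σ.part_mem.2 (mem_univ a)⟩,
    ker_eq_iff.2 fun a b ↦ by simp [e.injective.eq_iff]⟩
  left_inv f := Subtype.ext <| funext fun a ↦
    (ker_eq_iff.1 f.2 _ _).2 (σ.part_choose_of_mem_parts (σ.part_mem.2 (mem_univ a)))
  right_inv e := by
    ext A
    exact congrArg e (Subtype.ext (σ.part_choose_of_mem_parts A.2))

theorem card_filter_ker_eq [Fintype β] (σ : Finpartition (univ : Finset α)) :
    #{f : α → β | ker f = σ} = (Fintype.card β).descFactorial #σ.parts := by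
  rw [← Fintype.card_subtype, Fintype.card_congr (kerEquiv σ), Fintype.card_embedding_eq,
    Fintype.card_coe]

end Finpartition

theorem sum_prod_fiber_eq_sum_finpartition {α β R : Type*} [Fintype α] [DecidableEq α]
    [Fintype β] [DecidableEq β] [CommSemiring R] (g : Finset α → R) :
    ∑ f : α → β, ∏ b, g {a | f a = b} =
      ∑ σ : Finpartition (univ : Finset α), (Fintype.card β).descFactorial #σ.parts *
        ((∏ A ∈ σ.parts, g A) * g ∅ ^ (Fintype.card β - #σ.parts)) := by
  rw [← sum_fiberwise univ Finpartition.ker]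
  refine sum_congr rfl fun σ _ ↦ ?_
  rw [sum_congr rfl fun f hf ↦ by
      rw [Finpartition.prod_fiber_eq_prod_parts_ker, (mem_filter.1 hf).2],
    sum_const, Finpartition.card_filter_ker_eq, nsmul_eq_mul]

theorem hasSum_descFactorial_mul_pow_div_factorial {𝕂 : Type*} [RCLike 𝕂] (x : 𝕂) (k : ℕ) :
    HasSum (fun m : ℕ ↦ (m.descFactorial k : 𝕂) * x ^ (m - k) / m.factorial)
      (NormedSpace.exp x) := by
  rw [← hasSum_nat_add_iff' k]
  have hzero : ∑ m ∈ range k, (m.descFactorial k : 𝕂) * x ^ (m - k) / m.factorial = 0 :=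
    sum_eq_zero fun m hm ↦ by simp [Nat.descFactorial_eq_zero_iff_lt.2 (mem_range.1 hm)]
  rw [hzero, sub_zero]
  refine (NormedSpace.expSeries_div_hasSum_exp x).congr_fun fun m ↦ ?_
  have hk : ((m + k).descFactorial k : 𝕂) ≠ 0 :=
    Nat.cast_ne_zero.2 (Nat.descFactorial_eq_zero_iff_lt.not.2 (by omega))
  rw [Nat.add_sub_cancel, ← Nat.factorial_mul_descFactorial (Nat.le_add_left k m),
    Nat.add_sub_cancel, Nat.cast_mul, mul_comm (m.factorial : 𝕂), mul_div_mul_left _ _ hk]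

theorem poisson_moment_formula_general (ω : N →ₗ[ℂ] ℂ) (lam : ℝ)
    (hω1 : ω 1 = lam) (n : ℕ) (x : Fin n → N) :
    (Real.exp (-lam) : ℂ) *
        ∑' m : ℕ, (1 / m.factorial : ℂ) *
          tensorFunctional ω m ((List.ofFn fun i : Fin n => lamM m (x i)).prod)
      = ∑ σ : Finpartition (Finset.univ : Finset (Fin n)),
          ∏ A ∈ σ.parts, ω (ordProd x A) := by
  have hterm (m : ℕ) :
      (1 / m.factorial : ℂ) * tensorFunctional ω m (List.ofFn fun i ↦ lamM m (x i)).prod =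
        ∑ σ : Finpartition (univ : Finset (Fin n)),
          (m.descFactorial #σ.parts : ℂ) * (lam : ℂ) ^ (m - #σ.parts) / m.factorial *
            ∏ A ∈ σ.parts, ω (ordProd x A) := by
    rw [tensorFunctional_prod_lamM, sum_prod_fiber_eq_sum_finpartition fun A ↦ ω (ordProd x A),
      mul_sum]
    simp only [Fintype.card_fin, ordProd_empty, hω1]
    exact sum_congr rfl fun σ _ ↦ by ring
  have hsum := hasSum_sum (s := univ) fun (σ : Finpartition (univ : Finset (Fin n))) _ ↦
    (hasSum_descFactorial_mul_pow_div_factorial (lam : ℂ) #σ.parts).mul_right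
      (∏ A ∈ σ.parts, ω (ordProd x A))
  rw [tsum_congr hterm, hsum.tsum_eq, mul_sum]
  refine sum_congr rfl fun σ _ ↦ ?_
  rw [← mul_assoc, Complex.ofReal_exp, Complex.ofReal_neg, ← Complex.exp_eq_exp_ℂ,
    ← Complex.exp_add, neg_add_cancel, Complex.exp_zero, one_mul]

/-- **Moment formula for the Poisson state**: for a linear functional `ω` on a unital
algebra `N` with `ω(1) = λ`,
`e^{-λ} ∑_{m≥0} (1/m!) ω^{⊗m}(λ_m(x_1) ⋯ λ_m(x_n)) = ∑_{σ ∈ P(n)} ∏_{A ∈ σ} ω(→∏_{i∈A} x_i)`,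
the sum on the right running over all set partitions of `{1, …, n}`. -/
theorem poisson_moment_formula (ω : N →ₗ[ℂ] ℂ) (lam : ℝ) (hlam : 0 < lam)
    (hω1 : ω 1 = lam) (n : ℕ) (x : Fin n → N) :
    (Real.exp (-lam) : ℂ) *
        ∑' m : ℕ, (1 / m.factorial : ℂ) *
          tensorFunctional ω m ((List.ofFn fun i : Fin n => lamM m (x i)).prod)
      = ∑ σ : Finpartition (Finset.univ : Finset (Fin n)),
          ∏ A ∈ σ.parts, ω (ordProd x A) :=
  poisson_moment_formula_general ω lam hω1 n x
end

section
/- Inner product of λ_∅-vectors: with ω a state-like functional, the vectors λ_∅(x_1,...,x_n)ξ_ω satisfy ⟨λ_∅(x_1,...,x_n)ξ_ω, λ_∅(y_1,...,y_m)ξ_ω⟩ = Σ_{p=0}^{min(m,n)} Σ_{A_n⊔B_n=[n], A_m⊔B_m=[m], |B_n|=|B_m|=p} Π_{i∈B_n, j∈B_m (matched bijectively)} ω(x_i* y_j) Π_{i∈A_n} ω(x_i*) Π_{j∈A_m} ω(y_j), where the inner sum over matchings runs over bijections B_n → B_m. In particular, if all x_i, y_j are mean-zero (ω(x_i) = ω(y_j)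 = 0), then the inner product equals δ_{n,m} Σ_{π∈S_n} Π_{i=1}^n ω(x_i* y_{π(i)}). -/
/-! Each term of `lamEmptyIP` indexed by a pair `(s, t)` with `s` or `t` proper contains a factor
`ω (x i*) = conj (ω (x i)) = 0` or `ω (y j) = 0`. Only `s = t = univ` survives: the sum over all
bijections `Fin n ≃ Fin m`, which is empty unless `n = m`. -/

variable {N : Type*} [Ring N] [StarRing N] [Algebra ℂ N]

/-- The combinatorial inner product of `λ_∅`-vectors:
`⟨λ_∅(x_1,…,x_n)ξ_ω, λ_∅(y_1,…,y_m)ξ_ω⟩ = ∑_p ∑_{B_n ⊆ [n], B_m ⊆ [m], |B_n|=|B_m|=p}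
∑_{bijections e : B_n → B_m} ∏_{i∈B_n} ω(x_i* y_{e(i)}) ∏_{i∉B_n} ω(x_i*) ∏_{j∉B_m} ω(y_j)`
(the sums over `p` and over the paired subsets being encoded by summing over all pairs
of subsets of equal cardinality together with all bijections between them). -/
noncomputable def lamEmptyIP (ω : N →ₗ[ℂ] ℂ) {ι κ : Type*}
    [Fintype ι] [Fintype κ] [DecidableEq ι] [DecidableEq κ]
    (x : ι → N) (y : κ → N) : ℂ :=
  ∑ s : Finset ι, ∑ t : Finset κ,
    if s.card = t.card then
      (∑ e : {i // i ∈ s} ≃ {j // j ∈ t}, ∏ i : {i // i ∈ s}, ω (star (x i.1) * y (e i).1))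
        * (∏ i ∈ sᶜ, ω (star (x i))) * (∏ j ∈ tᶜ, ω (y j))
    else 0

theorem Finset.prod_compl_eq_zero_of_ne_univ {α M : Type*} [Fintype α] [DecidableEq α]
    [CommMonoidWithZero M] {f : α → M} (hf : ∀ a, f a = 0) {s : Finset α} (hs : s ≠ univ) :
    ∏ a ∈ sᶜ, f a = 0 := by
  obtain ⟨a, ha⟩ : sᶜ.Nonempty := by
    rwa [Finset.nonempty_iff_ne_empty, Ne, Finset.compl_eq_empty_iff]
  exact Finset.prod_eq_zero ha (hf a)

theorem Fintype.sum_equiv_subtype_univ_prod {ι κ M : Type*} [Fintype ι] [Fintype κ]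
    [DecidableEq ι] [DecidableEq κ] [CommSemiring M] (f : ι → κ → M) :
    ∑ e : {i // i ∈ (Finset.univ : Finset ι)} ≃ {j // j ∈ (Finset.univ : Finset κ)},
        ∏ i, f i.1 (e i).1 =
      ∑ e : ι ≃ κ, ∏ i, f i (e i) := by
  rw [← ((Equiv.subtypeUnivEquiv Finset.mem_univ).equivCongr
    (Equiv.subtypeUnivEquiv Finset.mem_univ)).symm.sum_comp]
  refine Fintype.sum_congr _ _ fun e => ?_
  exact Fintype.prod_equiv (Equiv.subtypeUnivEquiv Finset.mem_univ) _ _ fun i => rfl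

theorem lamEmptyIP_eq_sum_equiv_of_mean_zero (ω : N →ₗ[ℂ] ℂ) {ι κ : Type*} [Fintype ι]
    [Fintype κ] [DecidableEq ι] [DecidableEq κ] (x : ι → N) (y : κ → N)
    (hx : ∀ i, ω (star (x i)) = 0) (hy : ∀ j, ω (y j) = 0) :
    lamEmptyIP ω x y = ∑ e : ι ≃ κ, ∏ i, ω (star (x i) * y (e i)) := by
  unfold lamEmptyIP
  rw [Fintype.sum_eq_single Finset.univ, Fintype.sum_eq_single Finset.univ]
  · simp only [Finset.compl_univ, Finset.prod_empty, mul_one, Finset.card_univ,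
      Fintype.sum_equiv_subtype_univ_prod fun i j => ω (star (x i) * y j)]
    split_ifs with hcard
    · rfl
    · have : IsEmpty (ι ≃ κ) := ⟨fun e => hcard (Fintype.card_congr e)⟩
      rw [Fintype.sum_empty]
  · intro t ht
    simp [Finset.prod_compl_eq_zero_of_ne_univ hy ht]
  · intro s hs
    simp [Finset.prod_compl_eq_zero_of_ne_univ hx hs]

/-- **Mean-zero case of the `λ_∅` inner product formula**: if all `x_i`, `y_j` have
mean zero (`ω(x_i) = ω(y_j) = 0`), then only the complete-pairing terms survive and
`⟨λ_∅(x_1,…,x_n)ξ_ω, λ_∅(y_1,…,y_m)ξ_ω⟩ = δ_{n,m} ∑_{π ∈ S_n} ∏_{i=1}^n ω(x_i* y_{π(i)})`. -/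
theorem lamEmptyIP_mean_zero (ω : N →ₗ[ℂ] ℂ)
    (hstar : ∀ a : N, ω (star a) = starRingEnd ℂ (ω a))
    (n m : ℕ) (x : Fin n → N) (y : Fin m → N)
    (hx : ∀ i, ω (x i) = 0) (hy : ∀ j, ω (y j) = 0) :
    lamEmptyIP ω x y
      = if h : n = m then
          ∑ π : Equiv.Perm (Fin n), ∏ i : Fin n, ω (star (x i) * y (Fin.cast h (π i)))
        else 0 := by
  rw [lamEmptyIP_eq_sum_equiv_of_mean_zero ω x y (fun i => by rw [hstar, hx, map_zero]) hy]
  split_ifs with h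
  · subst h
    simp
  · have : IsEmpty (Fin n ≃ Fin m) := ⟨fun e => h (Fin.equiv_iff_eq.mp ⟨e⟩)⟩
    rw [Fintype.sum_empty]
end

section
/- Quasi-free orthogonality of the Fock basis: with λ_∅∅ defined by inclusion-exclusion from λ_∅ (subtracting means), the inner products satisfy ⟨λ_∅∅(x_1,...,x_n), λ_∅∅(y_1,...,y_m)⟩ = δ_{n,m} Σ_{π∈S_n} Π_{i=1}^n ω(x_i* y_{π(i)}). In particular, Gram positivity holds: the matrix [Σ_{π∈S_n} Π_i ω(x_i^{(a)*} x_{π(i)}^{(b)})]_{a,b} is positive semidefinite whenever [ω(x*y)] defines a positive semidefinite kernel, since the permanent-type form is the inner product on the n-fold symmetric tensor power of the GNS Hilbert space. -/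
open scoped ComplexOrder

variable {N : Type*} [Ring N] [StarRing N] [Algebra ℂ N]

/-- The inner product of the Fock-basis (`λ_∅∅`-) vectors, obtained from the `λ_∅`
inner product by the inclusion–exclusion definition
`λ_∅∅(x_1,…,x_n) = ∑_{A⊆[n]} ∏_{i∈A}(-ω(x_i)) · λ_∅({x_i : i ∉ A})`
and sesquilinearity. -/
noncomputable def lamEEIP (ω : N →ₗ[ℂ] ℂ) {n m : ℕ} (x : Fin n → N) (y : Fin m → N) : ℂ :=
  ∑ A : Finset (Fin n), ∑ B : Finset (Fin m),
    (∏ i ∈ A, starRingEnd ℂ (-ω (x i))) * (∏ j ∈ B, (-ω (y j)))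
      * lamEmptyIP ω (fun i : {i // i ∈ Aᶜ} => x i.1) (fun j : {j // j ∈ Bᶜ} => y j.1)

/-!
Expanding `λ_∅` by its pairing formula, `⟨λ_∅∅(x), λ_∅∅(y)⟩` becomes a sum over subsets
`S ⊆ [n]`, `T ⊆ [m]` of the permanent of the `S × T` block of `ω(x_i* y_j)`, weighted (as
`conj ω(x) = ω(x*)`) by `∑_{A ⊆ Sᶜ} ∏_{i ∈ A} (-ω(x_i*)) ∏_{i ∈ Sᶜ \ A} ω(x_i*)
= ∏_{i ∈ Sᶜ} (ω(x_i*) - ω(x_i*))` and the analogous factor for `y`. These vanish unless `S` and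
`T` are everything, so only the full pairings of `x` with `y` survive.

For positivity, the matrix indexed by pairs `(a, σ)` with entries
`∏_i ω(x^{(a)}_{σ i}* x^{(b)}_{τ i})` is an entrywise product of Gram matrices, hence positive
semidefinite by the Schur product theorem; summing its rows over `σ` and its columns over `τ` gives
`n!` times the permanent kernel.
-/

open Finset Matrix

section InclusionExclusion

variable {ι κ R : Type*} [Fintype ι] [Fintype κ] [DecidableEq ι] [DecidableEq κ] [CommRing R]

theorem sum_prod_neg_mul_sum_powerset_compl (a : ι → R) (g : Finset ι → R) :
    ∑ A : Finset ι, (∏ i ∈ A, -a i) * ∑ S ∈ Aᶜ.powerset, (∏ i ∈ Aᶜ \ S, a i) * g S = g univ := by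
  have hcomm : ∀ A S : Finset ι, Aᶜ \ S = Sᶜ \ A := fun A S => by ext; simp [and_comm]
  calc ∑ A : Finset ι, (∏ i ∈ A, -a i) * ∑ S ∈ Aᶜ.powerset, (∏ i ∈ Aᶜ \ S, a i) * g S
      = ∑ A : Finset ι, ∑ S ∈ Aᶜ.powerset, (∏ i ∈ A, -a i) * (∏ i ∈ Sᶜ \ A, a i) * g S := by
        simp only [mul_sum, hcomm, mul_assoc]
    _ = ∑ S : Finset ι, ∑ A ∈ Sᶜ.powerset, (∏ i ∈ A, -a i) * (∏ i ∈ Sᶜ \ A, a i) * g S :=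
        sum_comm' fun A S => by simp only [mem_univ, mem_powerset, true_and, and_true,
          subset_compl_comm]
    _ = ∑ S : Finset ι, (∏ i ∈ Sᶜ, (-a i + a i)) * g S := by simp only [prod_add, sum_mul]
    _ = g univ := by
        rw [sum_eq_single_of_mem univ (mem_univ _) fun S _ hS => ?_]
        · rw [compl_univ, prod_empty, one_mul]
        · obtain ⟨i, hi⟩ := nonempty_iff_ne_empty.mpr ((compl_eq_empty_iff S).not.mpr hS)
          rw [prod_eq_zero hi (neg_add_cancel _), zero_mul]

theorem sum_sum_prod_neg_mul_sum_sum_powerset_compl (a : ι → R) (b : κ → R)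
    (F : Finset ι → Finset κ → R) :
    ∑ A : Finset ι, ∑ B : Finset κ, (∏ i ∈ A, -a i) * (∏ j ∈ B, -b j) *
      ∑ S ∈ Aᶜ.powerset, ∑ T ∈ Bᶜ.powerset, F S T * (∏ i ∈ Aᶜ \ S, a i) * ∏ j ∈ Bᶜ \ T, b j
      = F univ univ := by
  calc _ = ∑ A : Finset ι, (∏ i ∈ A, -a i) * ∑ S ∈ Aᶜ.powerset, (∏ i ∈ Aᶜ \ S, a i) *
          ∑ B : Finset κ, (∏ j ∈ B, -b j) * ∑ T ∈ Bᶜ.powerset, (∏ j ∈ Bᶜ \ T, b j) * F S T := by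
        simp only [mul_sum]
        refine sum_congr rfl fun A _ => ?_
        rw [sum_comm]
        refine sum_congr rfl fun S _ => sum_congr rfl fun B _ => ?_
        exact sum_congr rfl fun T _ => by ring
    _ = F univ univ := by
        simp only [sum_prod_neg_mul_sum_powerset_compl]

end InclusionExclusion

section Pairing

variable {ι κ ι' κ' R : Type*} [DecidableEq ι] [DecidableEq κ] [DecidableEq ι'] [DecidableEq κ']
  [CommSemiring R]

/-- The permanent of the `s × t` block of `f`. -/
def pairingSum (f : ι → κ → R) (s : Finset ι) (t : Finset κ) : R :=
  ∑ e : s ≃ t, ∏ i : s, f i (e i)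

theorem pairingSum_eq_zero_of_card_ne (f : ι → κ → R) {s : Finset ι} {t : Finset κ}
    (h : #s ≠ #t) : pairingSum f s t = 0 := by
  have : IsEmpty (s ≃ t) := ⟨fun e => h (card_eq_of_equiv e)⟩
  simp [pairingSum]

theorem pairingSum_map (f : ι' → κ' → R) (φ : ι ↪ ι') (ψ : κ ↪ κ') (s : Finset ι)
    (t : Finset κ) :
    pairingSum (fun i j => f (φ i) (ψ j)) s t = pairingSum f (s.map φ) (t.map ψ) :=
  Fintype.sum_equiv ((equivMap φ s).equivCongr (equivMap ψ t)) _ _ fun e =>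
    Fintype.prod_equiv (equivMap φ s) _ _ fun i => by simp [Equiv.equivCongr]

theorem pairingSum_univ [Fintype ι] [Fintype κ] (f : ι → κ → R) :
    pairingSum f univ univ = ∑ e : ι ≃ κ, ∏ i, f i (e i) :=
  Fintype.sum_equiv ((Equiv.subtypeUnivEquiv mem_univ).equivCongr
      (Equiv.subtypeUnivEquiv mem_univ)) _ _ fun e =>
    Fintype.prod_equiv (Equiv.subtypeUnivEquiv mem_univ) _ _ fun i => by
      simp [Equiv.equivCongr, Equiv.subtypeUnivEquiv]

theorem pairingSum_univ_fin {n m : ℕ} (f : Fin n → Fin m → R) :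
    pairingSum f univ univ
      = if h : n = m then ∑ π : Equiv.Perm (Fin n), ∏ i, f i (Fin.cast h (π i)) else 0 := by
  split_ifs with h
  · subst h
    simp [pairingSum_univ]
  · exact pairingSum_eq_zero_of_card_ne f (by simpa using h)

end Pairing

theorem sum_finset_map_eq_sum_powerset {ι ι' M : Type*} [Fintype ι] [DecidableEq ι']
    [AddCommMonoid M] (φ : ι ↪ ι') (h : Finset ι' → M) :
    ∑ s : Finset ι, h (s.map φ) = ∑ S ∈ (univ.map φ).powerset, h S := by
  rw [map_eq_image, powerset_image, powerset_univ, sum_image fun s _ t _ hst => ?_]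
  · simp_rw [map_eq_image]
  · simpa [← map_eq_image] using hst

theorem univ_map_subtype_mem {ι : Type*} (A : Finset ι) :
    univ.map (Function.Embedding.subtype (· ∈ A)) = A := by
  rw [univ_eq_attach, attach_map_val]

theorem prod_compl_subtype {ι M : Type*} [DecidableEq ι] [CommMonoid M] (A : Finset ι)
    (s : Finset A) (g : ι → M) :
    ∏ i ∈ sᶜ, g i = ∏ i ∈ A \ s.map (Function.Embedding.subtype (· ∈ A)), g i := by
  calc ∏ i ∈ sᶜ, g i = ∏ i ∈ (univ \ s).map (Function.Embedding.subtype (· ∈ A)), g i := by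
        rw [prod_map, compl_eq_univ_sdiff]; rfl
    _ = _ := by rw [Finset.map_sdiff, univ_map_subtype_mem]

section LamEmpty

variable {ι κ : Type*} [DecidableEq ι] [DecidableEq κ]

theorem lamEmptyIP_eq_sum_pairingSum (ω : N →ₗ[ℂ] ℂ) [Fintype ι] [Fintype κ]
    (x : ι → N) (y : κ → N) :
    lamEmptyIP ω x y = ∑ s : Finset ι, ∑ t : Finset κ,
      pairingSum (fun i j => ω (star (x i) * y j)) s t
        * (∏ i ∈ sᶜ, ω (star (x i))) * ∏ j ∈ tᶜ, ω (y j) := by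
  refine sum_congr rfl fun s _ => sum_congr rfl fun t _ => ?_
  split_ifs with h
  · rfl
  · rw [pairingSum_eq_zero_of_card_ne _ h, zero_mul, zero_mul]

theorem lamEmptyIP_subtype (ω : N →ₗ[ℂ] ℂ) (A : Finset ι) (B : Finset κ)
    (x : ι → N) (y : κ → N) :
    lamEmptyIP ω (fun i : {i // i ∈ A} => x i) (fun j : {j // j ∈ B} => y j)
      = ∑ S ∈ A.powerset, ∑ T ∈ B.powerset,
          pairingSum (fun i j => ω (star (x i) * y j)) S T
            * (∏ i ∈ A \ S, ω (star (x i))) * ∏ j ∈ B \ T, ω (y j) := by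
  rw [lamEmptyIP_eq_sum_pairingSum]
  conv_rhs => rw [← univ_map_subtype_mem A, ← univ_map_subtype_mem B]
  rw [← sum_finset_map_eq_sum_powerset (M := ℂ)]
  refine sum_congr rfl fun s _ => ?_
  rw [← sum_finset_map_eq_sum_powerset (M := ℂ)]
  refine sum_congr rfl fun t _ => ?_
  rw [univ_map_subtype_mem, univ_map_subtype_mem, prod_compl_subtype A s fun i => ω (star (x i)),
    prod_compl_subtype B t fun j => ω (y j)]
  congr 2
  simpa using
    pairingSum_map (fun i j => ω (star (x i) * y j)) (.subtype (· ∈ A)) (.subtype (· ∈ B)) s t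

end LamEmpty

theorem lamEEIP_eq_pairingSum (ω : N →ₗ[ℂ] ℂ)
    (hstar : ∀ a : N, ω (star a) = starRingEnd ℂ (ω a)) {n m : ℕ} (x : Fin n → N)
    (y : Fin m → N) :
    lamEEIP ω x y = pairingSum (fun i j => ω (star (x i) * y j)) univ univ := by
  have hconj : ∀ i, starRingEnd ℂ (-ω (x i)) = -ω (star (x i)) := fun i => by
    rw [map_neg, hstar]
  simp only [lamEEIP, hconj, lamEmptyIP_subtype]
  exact sum_sum_prod_neg_mul_sum_sum_powerset_compl _ _ _

namespace Matrix

variable {I R : Type*} [Fintype I] [CommRing R] [StarRing R]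

theorem star_dotProduct_mulVec_eq_sum (M : Matrix I I R) (c : I → R) :
    star c ⬝ᵥ M *ᵥ c = ∑ a, ∑ b, starRingEnd R (c a) * c b * M a b := by
  simp only [dotProduct, mulVec, mul_sum, Pi.star_apply, starRingEnd_apply]
  exact sum_congr rfl fun a _ => sum_congr rfl fun b _ => by ring

theorem posSemidef_iff_sum_nonneg [PartialOrder R] {M : Matrix I I R} :
    M.PosSemidef ↔
      M.IsHermitian ∧ ∀ c : I → R, 0 ≤ ∑ a, ∑ b, starRingEnd R (c a) * c b * M a b := by
  simp only [posSemidef_iff_dotProduct_mulVec, star_dotProduct_mulVec_eq_sum]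

theorem posSemidef_entrywise_prod {𝕜 J : Type*} [RCLike 𝕜] [DecidableEq I] (s : Finset J)
    (K : J → Matrix I I 𝕜) (hK : ∀ j ∈ s, (K j).PosSemidef) :
    (of fun a b => ∏ j ∈ s, K j a b).PosSemidef := by
  classical
  induction s using Finset.induction_on with
  | empty =>
    convert posSemidef_vecMulVec_self_star (fun _ : I => (1 : 𝕜)) using 1
    ext; simp [vecMulVec_apply]
  | insert j s hj ih =>
    simp only [prod_insert hj]
    exact (hK j (mem_insert_self j s)).hadamard (ih fun j' hj' => hK j' (mem_insert_of_mem hj'))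

end Matrix

theorem sum_sum_prod_perm_eq_factorial_mul {ι R : Type*} [Fintype ι] [DecidableEq ι]
    [CommSemiring R] (f : ι → ι → R) :
    ∑ σ : Equiv.Perm ι, ∑ τ : Equiv.Perm ι, ∏ i, f (σ i) (τ i)
      = (Fintype.card ι).factorial * ∑ π : Equiv.Perm ι, ∏ i, f i (π i) := by
  have hσ : ∀ σ : Equiv.Perm ι,
      ∑ τ : Equiv.Perm ι, ∏ i, f (σ i) (τ i) = ∑ π : Equiv.Perm ι, ∏ i, f i (π i) := fun σ =>
    Fintype.sum_equiv (Equiv.mulRight σ⁻¹) _ _ fun τ =>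
      Fintype.prod_equiv σ _ _ fun i => by simp
  simp only [hσ, sum_const, card_univ, Fintype.card_perm, nsmul_eq_mul]

theorem posSemidef_kernel (ω : N →ₗ[ℂ] ℂ)
    (hstar : ∀ a : N, ω (star a) = starRingEnd ℂ (ω a))
    (hPSD : ∀ (k : ℕ) (z : Fin k → N) (c : Fin k → ℂ),
      0 ≤ ∑ a : Fin k, ∑ b : Fin k, starRingEnd ℂ (c a) * c b * ω (star (z a) * z b))
    {I : Type*} [Fintype I] (z : I → N) :
    (of fun a b => ω (star (z a) * z b)).PosSemidef := by
  rw [posSemidef_iff_sum_nonneg]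
  refine ⟨?_, fun c => ?_⟩
  · ext a b
    simp [← hstar]
  · let e := (Fintype.equivFin I).symm
    simpa [← Fintype.sum_equiv e] using hPSD _ (z ∘ e) (c ∘ e)

theorem posSemidef_permanent_kernel (ω : N →ₗ[ℂ] ℂ)
    (hstar : ∀ a : N, ω (star a) = starRingEnd ℂ (ω a))
    (hPSD : ∀ (k : ℕ) (z : Fin k → N) (c : Fin k → ℂ),
      0 ≤ ∑ a : Fin k, ∑ b : Fin k, starRingEnd ℂ (c a) * c b * ω (star (z a) * z b))
    {I ι : Type*} [Fintype I] [DecidableEq I] [Fintype ι] [DecidableEq ι] (v : I → ι → N) :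
    (of fun a b => ∑ π : Equiv.Perm ι, ∏ i, ω (star (v a i) * v b (π i))).PosSemidef := by
  let P : Matrix (I × Equiv.Perm ι) (I × Equiv.Perm ι) ℂ :=
    of fun p q => ∏ i, ω (star (v p.1 (p.2 i)) * v q.1 (q.2 i))
  have hP : P.PosSemidef := posSemidef_entrywise_prod univ _ fun i _ =>
    posSemidef_kernel ω hstar hPSD fun p : I × Equiv.Perm ι => v p.1 (p.2 i)
  let B : Matrix (I × Equiv.Perm ι) I ℂ := of fun p a => if p.1 = a then 1 else 0
  have hBPB : (of fun a b => ∑ π : Equiv.Perm ι, ∏ i, ω (star (v a i) * v b (π i)))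
      = ((Fintype.card ι).factorial : ℂ)⁻¹ • (Bᴴ * P * B) := by
    ext a b
    simp only [P, B, of_apply, Matrix.smul_apply, Matrix.mul_apply, conjTranspose_apply,
      RCLike.star_def, MonoidWithZeroHom.map_ite_one_zero, ite_mul, one_mul, zero_mul,
      Fintype.sum_prod_type, sum_ite_irrel, sum_const_zero, sum_ite_eq', mem_univ, ↓reduceIte,
      mul_ite, mul_one, mul_zero, smul_eq_mul]
    rw [sum_comm, sum_sum_prod_perm_eq_factorial_mul fun i j => ω (star (v a i) * v b j),
      inv_mul_cancel_left₀ (Nat.cast_ne_zero.mpr (Nat.factorial_ne_zero _))]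
  rw [hBPB]
  exact (hP.conjTranspose_mul_mul_same B).smul (inv_nonneg.mpr (Nat.cast_nonneg _))

/-- **Quasi-free orthogonality of the Fock basis and Gram positivity**:
`⟨λ_∅∅(x_1,…,x_n), λ_∅∅(y_1,…,y_m)⟩ = δ_{n,m} ∑_{π∈S_n} ∏_i ω(x_i* y_{π(i)})`; and
whenever `[ω(x*y)]` is a positive semidefinite kernel, the permanent-type Gram matrix
`[∑_{π∈S_n} ∏_i ω(x_i^{(a)*} x_{π(i)}^{(b)})]_{a,b}` is positive semidefinite (it is the
Gram matrix in the `n`-fold symmetric tensor power of the GNS space). -/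
theorem lamEE_quasi_free (ω : N →ₗ[ℂ] ℂ)
    (hstar : ∀ a : N, ω (star a) = starRingEnd ℂ (ω a))
    (hPSD : ∀ (k : ℕ) (z : Fin k → N) (c : Fin k → ℂ),
      0 ≤ ∑ a : Fin k, ∑ b : Fin k, starRingEnd ℂ (c a) * c b * ω (star (z a) * z b)) :
    (∀ (n m : ℕ) (x : Fin n → N) (y : Fin m → N),
      lamEEIP ω x y
        = if h : n = m then
            ∑ π : Equiv.Perm (Fin n), ∏ i : Fin n, ω (star (x i) * y (Fin.cast h (π i)))
          else 0) ∧
    ∀ (n k : ℕ) (v : Fin k → Fin n → N) (c : Fin k → ℂ),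
      0 ≤ ∑ a : Fin k, ∑ b : Fin k,
            starRingEnd ℂ (c a) * c b
              * ∑ π : Equiv.Perm (Fin n), ∏ i : Fin n, ω (star (v a i) * v b (π i)) :=
  ⟨fun n m x y => by rw [lamEEIP_eq_pairingSum ω hstar, pairingSum_univ_fin],
    fun n k v c =>
      (posSemidef_iff_sum_nonneg.mp (posSemidef_permanent_kernel ω hstar hPSD v)).2 c⟩
end

section
/- Partition recursion for λ_∅-expansion: the span of {λ_∅(x_1,...,x_n) : n ∈ ℕ, x_i ∈ N} equals the span of {λ(x_1)···λ(x_n) : n ∈ ℕ, x_i ∈ N} in the universal enveloping algebra, via the recursion λ_∅(x_1,...,x_n) = λ(x_1)λ_∅(x_2,...,x_n) − Σ_{i=2}^n λ_∅(x_2,...,x_1 x_i,...,x_n). Concretely: each monomial λ(x_1)···λ(x_n) equals λ_∅(x_1,...,x_n) plus a finite linear combination of λ_∅-vectors of strictly shorter length (with arguments that are products of the x_i), and conversely. -/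
variable {N : Type*} [Ring N] [Algebra ℂ N]

attribute [local instance] LieRing.ofAssociativeRing

/-- The canonical Lie map `λ : N → U(N_Lie)` into the universal enveloping algebra of
`N` viewed as a Lie algebra (with commutator bracket). -/
noncomputable def uLam (x : N) : UniversalEnvelopingAlgebra ℂ N :=
  UniversalEnvelopingAlgebra.ι ℂ x

/-- The `λ_∅`-vectors, defined recursively by `λ_∅() = 1`, `λ_∅(x) = λ(x)` and
`λ_∅(x_1,…,x_n) = λ(x_1)λ_∅(x_2,…,x_n) − ∑_{i=2}^n λ_∅(x_2,…,x_1x_i,…,x_n)`. -/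
noncomputable def lamE : List N → UniversalEnvelopingAlgebra ℂ N
  | [] => 1
  | x :: xs =>
      uLam x * lamE xs - ∑ i : Fin xs.length, lamE (xs.set i (x * xs.get i))
  termination_by l => l.length
  decreasing_by
    · simp
    · simp [List.length_set]

/-!
By its defining recursion, `λ(x) λ_∅(l)` equals `λ_∅(x :: l)` plus `λ_∅`-vectors of lists of
the same length as `l`. Hence left multiplication by `λ(x)` raises the `λ_∅`-length filtration
by one, and induction on `n` shows that `λ(x_1)⋯λ(x_n) - λ_∅(x_1,…,x_n)` lies in the span of
`λ_∅`-vectors of length `< n`. This unitriangularity lets each family be solved for the other.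
-/

noncomputable def lamESpanBelow (n : ℕ) : Submodule ℂ (UniversalEnvelopingAlgebra ℂ N) :=
  Submodule.span ℂ {u | ∃ l : List N, l.length < n ∧ u = lamE l}

lemma lamESpanBelow_mono : Monotone (lamESpanBelow (N := N)) := fun _ _ hmn =>
  Submodule.span_mono fun _ ⟨l, hl, hu⟩ => ⟨l, hl.trans_le hmn, hu⟩

lemma lamE_mem_lamESpanBelow {l : List N} {n : ℕ} (hl : l.length < n) :
    lamE l ∈ lamESpanBelow n :=
  Submodule.subset_span ⟨l, hl, rfl⟩

lemma uLam_mul_lamE (x : N) (l : List N) :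
    uLam x * lamE l = lamE (x :: l) + ∑ i : Fin l.length, lamE (l.set i (x * l.get i)) := by
  rw [lamE]; abel

lemma uLam_mul_mem_lamESpanBelow_succ (x : N) {n : ℕ} {d : UniversalEnvelopingAlgebra ℂ N}
    (hd : d ∈ lamESpanBelow n) : uLam x * d ∈ lamESpanBelow (n + 1) := by
  induction hd using Submodule.span_induction with
  | mem u hu =>
    obtain ⟨l, hl, rfl⟩ := hu
    rw [uLam_mul_lamE]
    refine add_mem (lamE_mem_lamESpanBelow (by simpa using hl)) (sum_mem fun i _ => ?_)
    exact lamE_mem_lamESpanBelow (by rw [List.length_set]; omega)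
  | zero => simp
  | add a b _ _ ha hb => rw [mul_add]; exact add_mem ha hb
  | smul c a _ ha => rw [mul_smul_comm]; exact Submodule.smul_mem _ c ha

lemma prod_uLam_sub_lamE_mem_lamESpanBelow (l : List N) :
    (l.map uLam).prod - lamE l ∈ lamESpanBelow l.length := by
  induction l with
  | nil => simp [lamE]
  | cons x xs ih =>
    have hrec : ((x :: xs).map uLam).prod - lamE (x :: xs) =
        uLam x * ((xs.map uLam).prod - lamE xs) +
          ∑ i : Fin xs.length, lamE (xs.set i (x * xs.get i)) := by
      rw [List.map_cons, List.prod_cons, mul_sub, uLam_mul_lamE]; abel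
    rw [hrec]
    refine add_mem (uLam_mul_mem_lamESpanBelow_succ x ih) (sum_mem fun i _ => ?_)
    exact lamE_mem_lamESpanBelow (by simp)

lemma lamESpanBelow_le_span_prod_uLam (n : ℕ) :
    lamESpanBelow n ≤ Submodule.span ℂ {u | ∃ l : List N, u = (l.map uLam).prod} := by
  induction n with
  | zero => simp [lamESpanBelow]
  | succ n ih =>
    rw [lamESpanBelow, Submodule.span_le]
    rintro _ ⟨l, hl, rfl⟩
    rw [← sub_sub_cancel ((l.map uLam).prod) (lamE l)]
    refine sub_mem (Submodule.subset_span ⟨l, rfl⟩) (ih ?_)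
    exact lamESpanBelow_mono (Nat.lt_succ_iff.mp hl) (prod_uLam_sub_lamE_mem_lamESpanBelow l)

/-- **Partition recursion for the `λ_∅`-expansion**: the `λ_∅`-vectors and the
monomials `λ(x_1)⋯λ(x_n)` span the same subspace of the universal enveloping algebra;
concretely, each monomial `λ(x_1)⋯λ(x_n)` equals `λ_∅(x_1,…,x_n)` plus a finite linear
combination of `λ_∅`-vectors of strictly shorter length. -/
theorem lamE_spanning :
    Submodule.span ℂ {u : UniversalEnvelopingAlgebra ℂ N | ∃ l : List N, u = lamE l}
        = Submodule.span ℂ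
            {u : UniversalEnvelopingAlgebra ℂ N |
              ∃ l : List N, u = (l.map fun a => uLam a).prod} ∧
    ∀ l : List N,
      (l.map fun a => uLam a).prod - lamE l ∈
        Submodule.span ℂ
          {u : UniversalEnvelopingAlgebra ℂ N |
            ∃ l' : List N, l'.length < l.length ∧ u = lamE l'} := by
  refine ⟨le_antisymm ?_ ?_, prod_uLam_sub_lamE_mem_lamESpanBelow⟩
  · rw [Submodule.span_le]
    rintro _ ⟨l, rfl⟩
    exact lamESpanBelow_le_span_prod_uLam _ (lamE_mem_lamESpanBelow l.length.lt_succ_self)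
  · rw [Submodule.span_le]
    rintro _ ⟨l, rfl⟩
    have hlower : lamESpanBelow l.length ≤ Submodule.span ℂ {u | ∃ l : List N, u = lamE l} :=
      Submodule.span_mono fun _ ⟨l', _, hu⟩ => ⟨l', hu⟩
    rw [← add_sub_cancel (lamE l) ((l.map uLam).prod)]
    exact add_mem (Submodule.subset_span ⟨l, rfl⟩)
      (hlower (prod_uLam_sub_lamE_mem_lamESpanBelow l))
end
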